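/- The domination number of the incidence graph of any finite projective plane of order q equals 2q: there exists a dominating set of size 2q, and every dominating set has size at least 2q. -/

import Mathlib

/-!
Each point lies on `q + 1` lines, so a set of `a` points and `b` lines dominates at most
`b + a (q + 1)` of the `q² + q + 1` lines, and dually at most `a + b (q + 1)` of the points;
the two inequalities force `a + b ≥ 2q` (if, say, `a < q`, the first one already gives
`a + b ≥ q² + q + 1 - a q > 2q`). Conversely, for a flag `p ∈ l`, the other `q` points
of `l` together with the other `q` lines through `p` dominate: a line other than `l` missing `p`
meets `l` elsewhere, and dually.
-/

open Configuration

/-- `Ps ∪ Ls` is a dominating set of the incidence graph. -/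
def IsDominating {P L : Type*} [Membership P L] (Ps : Set P) (Ls : Set L) : Prop :=
  (∀ l : L, l ∈ Ls ∨ ∃ p ∈ Ps, p ∈ l) ∧ (∀ p : P, p ∈ Ps ∨ ∃ l ∈ Ls, p ∈ l)

theorem Nat.two_mul_le_add_of_sq_add_add_one_le {q a b : ℕ}
    (ha : q ^ 2 + q + 1 ≤ b + a * (q + 1)) (hb : q ^ 2 + q + 1 ≤ a + b * (q + 1)) :
    2 * q ≤ a + b := by
  by_contra! h
  rcases lt_or_ge a q with ha' | ha' <;> nlinarith

namespace Configuration.ProjectivePlane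

variable {P L : Type*} [Membership P L] [ProjectivePlane P L] [Finite P] [Finite L]

theorem ncard_points_on_line (l : L) : {p : P | p ∈ l}.ncard = order P L + 1 := by
  rw [← pointCount_eq P l, pointCount, ← Nat.card_coe_set_eq]
  rfl

theorem ncard_lines_through_point (p : P) : {l : L | p ∈ l}.ncard = order P L + 1 := by
  have h := ncard_points_on_line (P := Dual L) (L := Dual P) p
  rw [Dual.order] at h
  exact h

theorem exists_mem_line_ne (l : L) (p : P) : ∃ x ∈ l, x ≠ p := by
  refine Set.exists_ne_of_one_lt_ncard (s := {x : P | x ∈ l}) ?_ p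
  rw [ncard_points_on_line]
  linarith [one_lt_order P L]

theorem ncard_lines_meeting_le (Ps : Set P) :
    {l : L | ∃ p ∈ Ps, p ∈ l}.ncard ≤ Ps.ncard * (order P L + 1) := by
  have hPs := Ps.toFinite
  calc {l : L | ∃ p ∈ Ps, p ∈ l}.ncard = (⋃ p ∈ hPs.toFinset, {l : L | p ∈ l}).ncard := by
        congr 1; ext; simp
    _ ≤ ∑ p ∈ hPs.toFinset, {l : L | p ∈ l}.ncard := Finset.set_ncard_biUnion_le _ _
    _ = Ps.ncard * (order P L + 1) := by
        simp [ncard_lines_through_point, Set.ncard_eq_toFinset_card Ps hPs]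

theorem order_sq_add_order_add_one_le {Ps : Set P} {Ls : Set L}
    (h : ∀ l : L, l ∈ Ls ∨ ∃ p ∈ Ps, p ∈ l) :
    order P L ^ 2 + order P L + 1 ≤ Ls.ncard + Ps.ncard * (order P L + 1) := by
  have : Fintype L := Fintype.ofFinite L
  calc order P L ^ 2 + order P L + 1 = (Set.univ : Set L).ncard := by
        rw [Set.ncard_univ, Nat.card_eq_fintype_card, card_lines]
    _ ≤ (Ls ∪ {l : L | ∃ p ∈ Ps, p ∈ l}).ncard :=
        Set.ncard_le_ncard (fun l _ => h l) (Set.toFinite _)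
    _ ≤ Ls.ncard + {l : L | ∃ p ∈ Ps, p ∈ l}.ncard := Set.ncard_union_le _ _
    _ ≤ Ls.ncard + Ps.ncard * (order P L + 1) := by
        gcongr
        exact ncard_lines_meeting_le Ps

theorem two_mul_order_le_of_isDominating {Ps : Set P} {Ls : Set L} (h : IsDominating Ps Ls) :
    2 * order P L ≤ Ps.ncard + Ls.ncard := by
  have hLines := order_sq_add_order_add_one_le h.1
  have hPoints := order_sq_add_order_add_one_le (P := Dual L) (L := Dual P) h.2
  rw [Dual.order] at hPoints
  exact Nat.two_mul_le_add_of_sq_add_add_one_le hLines hPoints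

theorem forall_line_mem_or_meets_sdiff_pencils (p : P) (l : L) (m : L) :
    m ∈ {m : L | p ∈ m} \ {l} ∨ ∃ x ∈ {x : P | x ∈ l} \ {p}, x ∈ m := by
  by_cases hml : m = l
  · obtain ⟨x, hxl, hxp⟩ := exists_mem_line_ne l p
    exact .inr ⟨x, ⟨hxl, hxp⟩, hml ▸ hxl⟩
  by_cases hpm : p ∈ m
  · exact .inl ⟨hpm, hml⟩
  · obtain ⟨hxl, hxm⟩ := HasPoints.mkPoint_ax (P := P) (Ne.symm hml)
    exact .inr ⟨_, ⟨hxl, fun h => hpm (h ▸ hxm)⟩, hxm⟩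

theorem isDominating_sdiff_pencils (p : P) (l : L) :
    IsDominating ({x : P | x ∈ l} \ {p}) ({m : L | p ∈ m} \ {l}) :=
  ⟨forall_line_mem_or_meets_sdiff_pencils p l,
    forall_line_mem_or_meets_sdiff_pencils (P := Dual L) (L := Dual P) l p⟩

theorem ncard_sdiff_pencils {p : P} {l : L} (hpl : p ∈ l) :
    ({x : P | x ∈ l} \ {p}).ncard + ({m : L | p ∈ m} \ {l}).ncard = 2 * order P L := by
  rw [Set.ncard_sdiff_singleton_of_mem (s := {x : P | x ∈ l}) hpl,
    Set.ncard_sdiff_singleton_of_mem (s := {m : L | p ∈ m}) hpl,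
    ncard_points_on_line, ncard_lines_through_point]
  omega

end Configuration.ProjectivePlane

/-- The domination number of the incidence graph of a projective plane of order `q`
is exactly `2q`. -/
theorem domination_number_eq_two_q {P L : Type*} [Membership P L] [ProjectivePlane P L]
    [Fintype P] [Fintype L] {q : ℕ} (hq : ProjectivePlane.order P L = q) :
    (∃ (Ps : Set P) (Ls : Set L), IsDominating Ps Ls ∧ Ps.ncard + Ls.ncard = 2 * q) ∧
    (∀ (Ps : Set P) (Ls : Set L), IsDominating Ps Ls → 2 * q ≤ Ps.ncard + Ls.ncard) := by
  subst hq
  obtain ⟨-, p, -, -, l, -, -, -, -, hpl, -⟩ := @ProjectivePlane.exists_config P L _ _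
  exact ⟨⟨_, _, ProjectivePlane.isDominating_sdiff_pencils p l,
      ProjectivePlane.ncard_sdiff_pencils hpl⟩,
    fun _ _ => ProjectivePlane.two_mul_order_le_of_isDominating⟩
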